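/- arXiv:2111.11758 — 4 statements merged into one kernel-verified Lean document; each statement's English description precedes it below -/
import Mathlib

section
/- Let Ω be a finite nonempty type, let μ : Ω → ℝ be a strictly positive probability vector (μ(ω) > 0 for all ω and ∑_ω μ(ω) = 1), and let u denote the uniform probability vector u(ω) = 1/|Ω|. Then the worst-case value sup over probability vectors β : Ω → ℝ (β(ω) ≥ 0, ∑_ω β(ω) = 1) of L_μ(β) = ∑_ω β(ω)²/μ(ω) satisfies sup_β L_u(β) = |Ω| ≤ sup_β L_μ(β), with equality if and only if μ = u. In other words, the maximum entropy (uniform) distribution is the unique solution of the robust optimization problem argmin_μ max_β L_μ(β). -/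
/-!
For a probability vector `β` we have `β ω ^ 2 ≤ β ω`, so `L_μ(β) ≤ ∑ β ω / μ ω ≤ max_ω 1 / μ ω`,
with equality at a point mass: the worst case is `max_ω 1 / μ ω`. The smallest weight of a
probability vector is at most `1 / |Ω|`, so this maximum is at least `|Ω|`, and it equals `|Ω|`
exactly when every weight is at least `1 / |Ω|`, which for weights summing to `1` forces `μ` to be
uniform.
-/

open Finset

section

variable {Ω : Type*} [Fintype Ω]

abbrev lossValues (μ : Ω → ℝ) : Set ℝ :=
  {x : ℝ | ∃ β : Ω → ℝ, (∀ ω, 0 ≤ β ω) ∧ (∑ ω, β ω = 1) ∧ x = ∑ ω, β ω ^ 2 / μ ω}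

lemma sum_sq_div_le_sup'_inv [Nonempty Ω] {μ β : Ω → ℝ} (hμ : ∀ ω, 0 < μ ω)
    (hβ₀ : ∀ ω, 0 ≤ β ω) (hβ₁ : ∑ ω, β ω = 1) :
    ∑ ω, β ω ^ 2 / μ ω ≤ univ.sup' univ_nonempty (fun ω => (μ ω)⁻¹) := by
  set M := univ.sup' univ_nonempty (fun ω => (μ ω)⁻¹)
  calc ∑ ω, β ω ^ 2 / μ ω ≤ ∑ ω, β ω * M := by
        refine sum_le_sum fun ω _ => ?_
        have hβ_le_one : β ω ≤ 1 := hβ₁ ▸ single_le_sum (fun i _ => hβ₀ i) (mem_univ ω)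
        have hinv_le : (μ ω)⁻¹ ≤ M := le_sup' (fun ω => (μ ω)⁻¹) (mem_univ ω)
        calc β ω ^ 2 / μ ω = β ω * (β ω * (μ ω)⁻¹) := by ring
          _ ≤ β ω * (1 * M) := by
            gcongr
            · exact hβ₀ ω
            · exact (inv_pos.2 (hμ ω)).le
          _ = β ω * M := by ring
    _ = M := by rw [← sum_mul, hβ₁, one_mul]

lemma sum_single_sq_div [DecidableEq Ω] (μ : Ω → ℝ) (ω₀ : Ω) :
    ∑ ω, (Pi.single ω₀ 1 : Ω → ℝ) ω ^ 2 / μ ω = (μ ω₀)⁻¹ := by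
  rw [sum_eq_single ω₀ (fun ω _ hω => by simp [hω]) (by simp)]
  simp

lemma isGreatest_lossValues [Nonempty Ω] {μ : Ω → ℝ} (hμ : ∀ ω, 0 < μ ω) :
    IsGreatest (lossValues μ) (univ.sup' univ_nonempty (fun ω => (μ ω)⁻¹)) := by
  classical
  obtain ⟨ω₀, -, hω₀⟩ := exists_mem_eq_sup' univ_nonempty (fun ω => (μ ω)⁻¹)
  refine ⟨⟨Pi.single ω₀ 1, fun ω => ?_, by simp, by rw [hω₀, sum_single_sq_div]⟩, ?_⟩
  · by_cases h : ω = ω₀ <;> simp [h]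
  · rintro x ⟨β, hβ₀, hβ₁, rfl⟩
    exact sum_sq_div_le_sup'_inv hμ hβ₀ hβ₁

lemma card_le_sup'_inv [Nonempty Ω] {μ : Ω → ℝ} (hμ : ∀ ω, 0 < μ ω) (hμ₁ : ∑ ω, μ ω = 1) :
    (Fintype.card Ω : ℝ) ≤ univ.sup' univ_nonempty (fun ω => (μ ω)⁻¹) := by
  have hcard : (0 : ℝ) < Fintype.card Ω := by exact_mod_cast Fintype.card_pos
  obtain ⟨ω₀, -, hω₀⟩ : ∃ ω ∈ univ, μ ω ≤ (Fintype.card Ω : ℝ)⁻¹ := by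
    refine exists_le_of_sum_le univ_nonempty ?_
    rw [hμ₁, sum_const, card_univ, nsmul_eq_mul, mul_inv_cancel₀ hcard.ne']
  calc (Fintype.card Ω : ℝ) = ((Fintype.card Ω : ℝ)⁻¹)⁻¹ := (inv_inv _).symm
    _ ≤ (μ ω₀)⁻¹ := inv_anti₀ (hμ ω₀) hω₀
    _ ≤ _ := le_sup' (fun ω => (μ ω)⁻¹) (mem_univ ω₀)

lemma eq_inv_card_of_sup'_inv_le_card [Nonempty Ω] {μ : Ω → ℝ} (hμ : ∀ ω, 0 < μ ω)
    (hμ₁ : ∑ ω, μ ω = 1) (hle : univ.sup' univ_nonempty (fun ω => (μ ω)⁻¹) ≤ Fintype.card Ω)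
    (ω : Ω) : μ ω = (Fintype.card Ω : ℝ)⁻¹ := by
  have hcard : (0 : ℝ) < Fintype.card Ω := by exact_mod_cast Fintype.card_pos
  have hge : ∀ i, (Fintype.card Ω : ℝ)⁻¹ ≤ μ i := fun i =>
    inv_le_of_inv_le₀ (hμ i) ((le_sup' (fun ω => (μ ω)⁻¹) (mem_univ i)).trans hle)
  have hsum : ∑ _i : Ω, (Fintype.card Ω : ℝ)⁻¹ = ∑ i, μ i := by
    rw [hμ₁, sum_const, card_univ, nsmul_eq_mul, mul_inv_cancel₀ hcard.ne']
  exact ((sum_eq_sum_iff_of_le fun i _ => hge i).1 hsum ω (mem_univ ω)).symm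

end

/-- The maximum entropy (uniform) distribution is the unique solution of the
robust optimization problem `argmin_μ max_β L_μ(β)`, where
`L_μ(β) = ∑ ω, β ω ^ 2 / μ ω`. -/
theorem stmt_0 {Ω : Type*} [Fintype Ω] [Nonempty Ω]
    (μ : Ω → ℝ) (hμpos : ∀ ω, 0 < μ ω) (hμsum : ∑ ω, μ ω = 1)
    (u : Ω → ℝ) (hu : ∀ ω, u ω = 1 / (Fintype.card Ω : ℝ)) :
    sSup {x : ℝ | ∃ β : Ω → ℝ, (∀ ω, 0 ≤ β ω) ∧ (∑ ω, β ω = 1) ∧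
        x = ∑ ω, β ω ^ 2 / u ω} = (Fintype.card Ω : ℝ) ∧
    (Fintype.card Ω : ℝ) ≤
      sSup {x : ℝ | ∃ β : Ω → ℝ, (∀ ω, 0 ≤ β ω) ∧ (∑ ω, β ω = 1) ∧
        x = ∑ ω, β ω ^ 2 / μ ω} ∧
    (sSup {x : ℝ | ∃ β : Ω → ℝ, (∀ ω, 0 ≤ β ω) ∧ (∑ ω, β ω = 1) ∧
        x = ∑ ω, β ω ^ 2 / μ ω} = (Fintype.card Ω : ℝ) ↔ μ = u) := by
  have hu' : u = fun _ => (Fintype.card Ω : ℝ)⁻¹ := funext fun ω => by rw [hu, one_div]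
  have hupos : ∀ ω, 0 < u ω := fun ω => by rw [hu']; positivity
  have hsup_u : sSup (lossValues u) = Fintype.card Ω := by
    rw [(isGreatest_lossValues hupos).csSup_eq, hu']
    simp
  rw [(isGreatest_lossValues hμpos).csSup_eq]
  refine ⟨hsup_u, card_le_sup'_inv hμpos hμsum, fun heq => ?_, ?_⟩
  · rw [hu']
    exact funext (eq_inv_card_of_sup'_inv_le_card hμpos hμsum heq.le)
  · rintro rfl
    rw [← hsup_u, (isGreatest_lossValues hupos).csSup_eq]
end

section
/- Let α ∈ ℝ with 1 ≤ α < 3/2 and let m ∈ ℝ with 0 < m < 1. Set w₁* = (m·(100.3) + α·(1−m)·(−35))/(m + α²·(1−m)), w₂* = 20, w₃* = 30. Then the two conditions w₁* > w₂* and α·w₁* < w₃* hold simultaneously if and only if α(20α + 35)/(80.3 + 35α + 20α²) < m < 65α²/(65α² + 100.3α − 30). -/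
/-- In the offline oracle four-state MDP example, the oracle least-squares
weights recover the optimal policy (w₁* > w₂* and α·w₁* < w₃*) if and only if
`α(20α+35)/(80.3+35α+20α²) < m < 65α²/(65α²+100.3α−30)`. -/
theorem stmt_8 (α m : ℝ) (hα : 1 ≤ α) (hα' : α < 3 / 2)
    (hm0 : 0 < m) (hm1 : m < 1)
    (w1 w2 w3 : ℝ)
    (hw1 : w1 = (m * 100.3 + α * (1 - m) * (-35)) / (m + α ^ 2 * (1 - m)))
    (hw2 : w2 = 20) (hw3 : w3 = 30) :
    (w1 > w2 ∧ α * w1 < w3) ↔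
      (α * (20 * α + 35) / (80.3 + 35 * α + 20 * α ^ 2) < m ∧
        m < 65 * α ^ 2 / (65 * α ^ 2 + 100.3 * α - 30)) := by
  subst hw1 hw2 hw3
  have hd : (0:ℝ) < m + α ^ 2 * (1 - m) := by nlinarith
  have h1 : (0:ℝ) < 80.3 + 35 * α + 20 * α ^ 2 := by nlinarith
  have h2 : (0:ℝ) < 65 * α ^ 2 + 100.3 * α - 30 := by nlinarith
  rw [gt_iff_lt, lt_div_iff₀ hd, ← mul_div_assoc, div_lt_iff₀ hd,
    div_lt_iff₀ h1, lt_div_iff₀ h2]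
  constructor
  · rintro ⟨a, b⟩; constructor <;> nlinarith
  · rintro ⟨a, b⟩; constructor <;> nlinarith
end

section
/- For every real α with 1 ≤ α < 3/2, one has α(20α + 35)/(80.3 + 35α + 20α²) < 65α²/(65α² + 100.3α − 30); that is, the interval of data-distribution proportions m = μ(s₁,a₁) for which the oracle least-squares solution recovers the optimal policy of the four-state MDP is nonempty. Moreover, at α = 3/2 the two bounds coincide, so the interval degenerates. -/
/-- For all α with 1 ≤ α < 3/2, the interval of data-distribution proportions
m for which the oracle least-squares solution recovers the optimal policy of
the four-state MDP is nonempty, and at α = 3/2 its endpoints coincide. -/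
theorem stmt_9 :
    (∀ α : ℝ, 1 ≤ α → α < 3 / 2 →
      α * (20 * α + 35) / (80.3 + 35 * α + 20 * α ^ 2) <
        65 * α ^ 2 / (65 * α ^ 2 + 100.3 * α - 30)) ∧
    (3 / 2 : ℝ) * (20 * (3 / 2) + 35) / (80.3 + 35 * (3 / 2) + 20 * (3 / 2) ^ 2) =
      65 * (3 / 2 : ℝ) ^ 2 / (65 * (3 / 2) ^ 2 + 100.3 * (3 / 2) - 30) := by
  constructor
  · intro α h1 h2
    have hd1 : (0:ℝ) < 80.3 + 35 * α + 20 * α ^ 2 := by nlinarith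
    have hd2 : (0:ℝ) < 65 * α ^ 2 + 100.3 * α - 30 := by nlinarith
    rw [div_lt_div_iff₀ hd1 hd2]
    have key : (0:ℝ) < (3/2 - α) * (2006 * α + 700) * α := by
      apply mul_pos
      · apply mul_pos <;> nlinarith
      · linarith
    nlinarith [key]
  · norm_num
end

section
/- Consider the semi-gradient temporal-difference fixed-point equations of the four-state MDP with α = 5/4, μ(s₁,a₁) = 7/10, μ(s₂,a₁) = 3/10: (i) 0.7·(100 + 0.01·max(α·w₁, w₃) − w₁) + α·0.3·(−35 − α·w₁) = 0, (ii) w₂ = −10 + max(α·w₁, w₃), (iii) w₃ = 30. This system has a unique solution (w₁, w₂, w₃) ∈ ℝ³, given by w₃ = 30, w₁ = 56.875/1.16, w₂ = −10 + (5/4)·w₁, and this solution satisfies α·w₁ > w₃ and w₂ > w₁; hence at the temporal-difference fixed point the greedy policy takes the wrong action at both states s₁ and s₂. -/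
lemma key12 (w : ℝ × ℝ × ℝ)
    (h : 0.7 * (100 + 0.01 * max ((5 / 4) * w.1) w.2.2 - w.1) +
          (5 / 4) * 0.3 * (-35 - (5 / 4) * w.1) = 0 ∧
        w.2.1 = -10 + max ((5 / 4) * w.1) w.2.2 ∧
        w.2.2 = 30) :
    w = (56.875 / 1.16, -10 + (5 / 4) * (56.875 / 1.16), 30) := by
  obtain ⟨h1, h2, h3⟩ := h
  rcases le_or_gt ((5 / 4) * w.1) w.2.2 with hle | hlt
  · rw [max_eq_right hle] at h1 h2
    exfalso; rw [h3] at h1 hle; nlinarith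
  · rw [max_eq_left hlt.le] at h1 h2
    have hw1 : w.1 = 56.875 / 1.16 := by nlinarith
    have : w = (w.1, w.2.1, w.2.2) := rfl
    rw [this, hw1, h2, h3, hw1]

/-- The semi-gradient TD fixed-point system of the four-state MDP with
α = 5/4, μ(s₁,a₁) = 7/10, μ(s₂,a₁) = 3/10 has a unique solution, given by
w₃ = 30, w₁ = 56.875/1.16, w₂ = −10 + (5/4)·w₁, and at this fixed point the
greedy policy is wrong at both states: α·w₁ > w₃ and w₂ > w₁. -/
theorem stmt_12 :
    (∃! w : ℝ × ℝ × ℝ,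
      0.7 * (100 + 0.01 * max ((5 / 4) * w.1) w.2.2 - w.1) +
          (5 / 4) * 0.3 * (-35 - (5 / 4) * w.1) = 0 ∧
        w.2.1 = -10 + max ((5 / 4) * w.1) w.2.2 ∧
        w.2.2 = 30) ∧
    (∀ w : ℝ × ℝ × ℝ,
      (0.7 * (100 + 0.01 * max ((5 / 4) * w.1) w.2.2 - w.1) +
          (5 / 4) * 0.3 * (-35 - (5 / 4) * w.1) = 0 ∧
        w.2.1 = -10 + max ((5 / 4) * w.1) w.2.2 ∧
        w.2.2 = 30) →
      w = (56.875 / 1.16, -10 + (5 / 4) * (56.875 / 1.16), 30) ∧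
      (5 / 4) * w.1 > w.2.2 ∧ w.2.1 > w.1) := by
  have hmax : max ((5 / 4) * (56.875 / 1.16)) (30 : ℝ) = (5 / 4) * (56.875 / 1.16) := by
    rw [max_eq_left]; norm_num
  constructor
  · refine ⟨(56.875 / 1.16, -10 + (5 / 4) * (56.875 / 1.16), 30), ⟨?_, ?_, rfl⟩, fun w hw => key12 w hw⟩
    · simp only [hmax]; norm_num
    · simp only [hmax]
  · intro w hw
    refine ⟨key12 w hw, ?_, ?_⟩
    · rw [key12 w hw]; norm_num
    · rw [key12 w hw]; norm_num
end
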